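/- Let K : ℕ → ℕ satisfy 1 ≤ K(n) and K(n) = O(log n). Set t_ε = ⌊50·(1 + (log n)/(2K(n)))·n/log log n⌋ and q_n = 1 − exp(−K(n)/(log log n)⁴). Then Pr(Bin(n + t_ε, q_n) < n) → 0 as n → ∞. -/

import Mathlib

/-! Chernoff's bound `Pr(Bin(N, q) < a) ≤ exp (-(N q - a) ^ 2 / (4 N))` reduces the claim to two
estimates, with `L = log n` and `l = log L`: the mean surplus `(n + t) q - n` is at least
`20 n / l`, and `n + t ≤ 51 n L / l`; the exponent is then at least `n / L ^ 2 → ∞`.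
For the surplus, either the failure probability `exp (-K / l ^ 4)` is at most `1 / l`, and the
`50 n / l` basic trials suffice, or `K / l ^ 4 < log l`, and then the `25 n L / (K l)` extra
trials, each succeeding with probability at least `(K / l ^ 4) exp (-K / l ^ 4)`, make up for
the failures among the first `n` because `l ^ 5 ≤ L`. -/

open Filter

/-- `Pr(Bin(N,q) < a)`: the lower tail of a binomial random variable with `N` trials
and success probability `q`, below the real threshold `a`. -/
noncomputable def binomLT (N : ℕ) (q a : ℝ) : ℝ :=
  ∑ k ∈ Finset.range (N + 1),
    if (k : ℝ) < a then (N.choose k : ℝ) * q ^ k * (1 - q) ^ (N - k) else 0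

lemma binomLT_nonneg (N : ℕ) {q : ℝ} (hq0 : 0 ≤ q) (hq1 : q ≤ 1) (a : ℝ) :
    0 ≤ binomLT N q a :=
  Finset.sum_nonneg fun k _ => by
    have : 0 ≤ 1 - q := sub_nonneg.2 hq1
    split <;> positivity

lemma binomLT_le_exp_mul_pow (N : ℕ) {q : ℝ} (hq0 : 0 ≤ q) (hq1 : q ≤ 1) (a : ℝ) {θ : ℝ}
    (hθ : 0 ≤ θ) :
    binomLT N q a ≤ Real.exp (θ * a) * (q * Real.exp (-θ) + (1 - q)) ^ N := by
  have h1q : 0 ≤ 1 - q := sub_nonneg.2 hq1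
  rw [add_pow, Finset.mul_sum]
  refine Finset.sum_le_sum fun k _ => ?_
  split_ifs with hka
  · have hexp : Real.exp (θ * a) * (q * Real.exp (-θ)) ^ k
        = Real.exp (θ * (a - k)) * q ^ k := by
      rw [mul_pow, ← Real.exp_nat_mul, mul_left_comm, mul_sub, sub_eq_add_neg, Real.exp_add]
      ring_nf
    have hone : 1 ≤ Real.exp (θ * (a - k)) := Real.one_le_exp (by nlinarith)
    calc (N.choose k : ℝ) * q ^ k * (1 - q) ^ (N - k)
        ≤ Real.exp (θ * (a - k)) * ((N.choose k : ℝ) * q ^ k * (1 - q) ^ (N - k)) :=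
          le_mul_of_one_le_left (by positivity) hone
      _ = _ := by linear_combination (-(1 - q) ^ (N - k) * N.choose k : ℝ) * hexp
  · positivity

lemma Real.exp_neg_le_one_sub_add_sq {x : ℝ} (hx : 0 ≤ x) : Real.exp (-x) ≤ 1 - x + x ^ 2 := by
  have hinv : Real.exp (-x) * Real.exp x = 1 := by rw [← Real.exp_add]; simp
  nlinarith [Real.add_one_le_exp x, Real.exp_pos (-x), pow_nonneg hx 3]

lemma binomLT_le_exp_neg_sq_div {N : ℕ} (hN : 0 < N) {q : ℝ} (hq0 : 0 ≤ q) (hq1 : q ≤ 1)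
    {a : ℝ} (hM : a < N * q) :
    binomLT N q a ≤ Real.exp (-(N * q - a) ^ 2 / (4 * N)) := by
  have hN0 : (0 : ℝ) < N := Nat.cast_pos.2 hN
  set M := (N : ℝ) * q - a with hMdef
  -- the optimal choice of `θ` for the quadratic upper bound on `1 - exp (-θ)`
  set θ := M / (2 * N) with hθdef
  have hθ : 0 < θ := div_pos (sub_pos.2 hM) (by positivity)
  have hbase : q * Real.exp (-θ) + (1 - q) ≤ Real.exp (-(q * (1 - Real.exp (-θ)))) := by
    linarith [Real.add_one_le_exp (-(q * (1 - Real.exp (-θ))))]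
  have hpow : (q * Real.exp (-θ) + (1 - q)) ^ N ≤ Real.exp (N * -(q * (1 - Real.exp (-θ)))) := by
    rw [Real.exp_nat_mul]
    exact pow_le_pow_left₀ (by nlinarith [Real.exp_pos (-θ)]) hbase N
  have hexponent : θ * a + N * -(q * (1 - Real.exp (-θ))) ≤ -M ^ 2 / (4 * N) := by
    have h1 : N * q * (θ - θ ^ 2) ≤ N * q * (1 - Real.exp (-θ)) :=
      mul_le_mul_of_nonneg_left (by linarith [Real.exp_neg_le_one_sub_add_sq hθ.le])
        (by positivity)
    have h2 : θ * a - (N * q * θ - N * θ ^ 2) = -M ^ 2 / (4 * N) := by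
      rw [hθdef, hMdef]; field_simp; ring
    nlinarith [mul_nonneg (mul_nonneg hN0.le (sub_nonneg.2 hq1)) (sq_nonneg θ)]
  calc binomLT N q a ≤ Real.exp (θ * a) * (q * Real.exp (-θ) + (1 - q)) ^ N :=
        binomLT_le_exp_mul_pow N hq0 hq1 a hθ.le
    _ ≤ Real.exp (θ * a) * Real.exp (N * -(q * (1 - Real.exp (-θ)))) := by gcongr
    _ ≤ Real.exp (-M ^ 2 / (4 * N)) := by rw [← Real.exp_add]; exact Real.exp_le_exp.2 hexponent

/-- The right-hand side is `(n + t) q - n` for `q = 1 - exp (-K / l ^ 4)`. -/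
lemma le_mean_surplus {n L l K t : ℝ} (hK : 1 ≤ K) (hl : 2 ≤ l) (hlL : l ^ 5 ≤ L) (hLn : L ≤ n)
    (ht : 50 * (1 + L / (2 * K)) * n / l - 1 ≤ t) :
    20 * (n / l) ≤ t * (1 - Real.exp (-K / l ^ 4)) - n * Real.exp (-K / l ^ 4) := by
  have hl0 : 0 < l := by linarith
  have hL : l ≤ L := le_trans (by nlinarith [pow_le_pow_left₀ (by norm_num) hl 4]) hlL
  have hL0 : 0 < L := by linarith
  have hn0 : 0 < n := by linarith
  have ha : 1 ≤ n / l := (one_le_div hl0).2 (by linarith)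
  set x := K / l ^ 4 with hxdef
  set E := Real.exp (-x) with hEdef
  rw [neg_div]
  have hx0 : 0 < x := by positivity
  have hE0 : 0 < E := Real.exp_pos _
  have hEx : E * (1 + x) ≤ 1 := by
    have : E * Real.exp x = 1 := by rw [hEdef, ← Real.exp_add]; simp
    nlinarith [Real.add_one_le_exp x]
  have hsplit : 50 * (1 + L / (2 * K)) * n / l = 50 * (n / l) + 25 * (n / l) * L / K := by
    field_simp; ring
  have hLK : 0 ≤ 25 * (n / l) * L / K := by positivity
  have ht49 : 49 * (n / l) ≤ t := by linarith
  rcases le_or_gt E (1 / l) with hEl | hEl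
  · have hE2 : E ≤ 1 / 2 := hEl.trans (by rw [div_le_div_iff₀ hl0 two_pos]; linarith)
    have hnE : n * E ≤ n / l := by
      rw [div_eq_mul_one_div]; exact mul_le_mul_of_nonneg_left hEl hn0.le
    nlinarith
  · have htx : (25 * n * L / l ^ 5 - x) * E ≤ t * (1 - E) := by
      have h1 : 25 * n * L / l ^ 5 - x ≤ t * x := by
        have : (25 * (n / l) * L / K - 1) * x = 25 * n * L / l ^ 5 - x := by
          rw [hxdef]; field_simp
        nlinarith
      nlinarith [mul_le_mul_of_nonneg_left hEx (by linarith : (0 : ℝ) ≤ t)]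
    have h25 : 25 * n ≤ 25 * n * L / l ^ 5 := by
      rw [le_div_iff₀ (by positivity)]; nlinarith
    have hnE : n / l ≤ n * E := by
      rw [div_eq_mul_one_div]; exact mul_le_mul_of_nonneg_left hEl.le hn0.le
    nlinarith

lemma binomLT_phase_two_le {n K : ℕ} (hK : 1 ≤ K) (hl : 2 ≤ Real.log (Real.log n))
    (hlL : Real.log (Real.log n) ^ 5 ≤ Real.log n) :
    binomLT (n + ⌊50 * (1 + Real.log n / (2 * K)) * n / Real.log (Real.log n)⌋₊)
        (1 - Real.exp (-(K : ℝ) / Real.log (Real.log n) ^ 4)) n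
      ≤ Real.exp (-(n / Real.log n ^ 2)) := by
  set L := Real.log n
  set l := Real.log L
  set E := Real.exp (-(K : ℝ) / l ^ 4)
  set T := 50 * (1 + L / (2 * K)) * n / l with hTdef
  set t := ⌊T⌋₊
  have hK1 : (1 : ℝ) ≤ K := Nat.one_le_cast.2 hK
  have hl0 : 0 < l := by linarith
  have hL : l ≤ L := le_trans (by nlinarith [pow_le_pow_left₀ (by norm_num) hl 4]) hlL
  have hL0 : 0 < L := by linarith
  have hLn : L ≤ n := Real.log_le_self n.cast_nonneg
  have hn0 : (0 : ℝ) < n := by linarith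
  have hn : 0 < n := Nat.cast_pos.1 hn0
  have hT0 : 0 ≤ T := by positivity
  have hM : 20 * (n / l) ≤ ((n + t : ℕ) : ℝ) * (1 - E) - n := by
    have := le_mean_surplus hK1 hl hlL hLn (Nat.sub_one_lt_floor T).le
    push_cast; linarith
  have hN : ((n + t : ℕ) : ℝ) ≤ 51 * (n / l) * L := by
    have htT : (t : ℝ) ≤ 50 * (n / l) + 25 * (n / l) * L / K := by
      refine (Nat.floor_le hT0).trans (le_of_eq ?_); rw [hTdef]; field_simp; ring
    have hKL : 25 * (n / l) * L / K ≤ 25 * (n / l) * L := div_le_self (by positivity) hK1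
    have hnL : (n : ℝ) ≤ n / l * L := by rw [div_mul_eq_mul_div, le_div_iff₀ hl0]; nlinarith
    push_cast; nlinarith [div_pos hn0 hl0]
  have hE1 : E ≤ 1 :=
    Real.exp_le_one_iff.2 (div_nonpos_of_nonpos_of_nonneg (by simp) (by positivity))
  have hE0 : 0 < E := Real.exp_pos _
  refine (binomLT_le_exp_neg_sq_div (by omega) (by linarith)
    (by linarith) (by nlinarith [div_pos hn0 hl0])).trans (Real.exp_le_exp.2 ?_)
  set a := (n : ℝ) / l
  have ha : 0 < a := div_pos hn0 hl0
  have hN0 : (0 : ℝ) < (n + t : ℕ) := by positivity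
  rw [neg_div, neg_le_neg_iff]
  calc (n : ℝ) / L ^ 2 ≤ a / L := by
        rw [div_div, sq]; gcongr
    _ ≤ (20 * a) ^ 2 / (4 * (51 * a * L)) := by
        rw [div_le_div_iff₀ (by positivity) (by positivity)]; nlinarith
    _ ≤ _ := by gcongr

lemma Real.eventually_log_pow_le_self (k : ℕ) : ∀ᶠ x in atTop, Real.log x ^ k ≤ x := by
  have h := Real.tendsto_pow_log_div_mul_add_atTop 1 0 k one_ne_zero
  simp only [one_mul, add_zero] at h
  filter_upwards [h.eventually_le_const zero_lt_one, eventually_gt_atTop 0] with x hx hx0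
  exact (div_le_one hx0).1 hx

lemma Real.tendsto_div_log_sq_atTop : Tendsto (fun x : ℝ => x / Real.log x ^ 2) atTop atTop := by
  have h := Real.tendsto_pow_log_div_mul_add_atTop 1 0 2 one_ne_zero
  simp only [one_mul, add_zero] at h
  have hpos : ∀ᶠ x in atTop, Real.log x ^ 2 / x ∈ Set.Ioi 0 := by
    filter_upwards [eventually_gt_atTop 1] with x hx
    exact div_pos (pow_pos (Real.log_pos hx) 2) (by linarith)
  exact (tendsto_nhdsWithin_iff.2 ⟨h, hpos⟩).inv_tendsto_nhdsGT_zero.congr fun x => inv_div _ _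

theorem phase_two_succeeds_general
    (K : ℕ → ℕ) (hK1 : ∀ n, 1 ≤ K n) :
    Tendsto
      (fun n : ℕ =>
        let tε : ℕ :=
          ⌊50 * (1 + Real.log n / (2 * K n)) * n / Real.log (Real.log n)⌋₊
        let q : ℝ := 1 - Real.exp (-(K n : ℝ) / (Real.log (Real.log n)) ^ 4)
        binomLT (n + tε) q (n : ℝ))
      atTop (nhds 0) := by
  have hlog : Tendsto (fun n : ℕ => Real.log n) atTop atTop :=
    Real.tendsto_log_atTop.comp tendsto_natCast_atTop_atTop
  have hbound : Tendsto (fun n : ℕ => Real.exp (-(n / Real.log n ^ 2))) atTop (nhds 0) :=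
    Real.tendsto_exp_atBot.comp <| tendsto_neg_atTop_atBot.comp <|
      Real.tendsto_div_log_sq_atTop.comp tendsto_natCast_atTop_atTop
  have hll : Tendsto (fun n : ℕ => Real.log (Real.log n)) atTop atTop :=
    Real.tendsto_log_atTop.comp hlog
  refine squeeze_zero' (Eventually.of_forall fun n => binomLT_nonneg _ ?_ ?_ _) ?_ hbound
  · exact sub_nonneg.2 <| Real.exp_le_one_iff.2 <|
      div_nonpos_of_nonpos_of_nonneg (by simp) (by positivity)
  · exact sub_le_self _ (Real.exp_pos _).le
  · filter_upwards [hll.eventually_ge_atTop 2,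
      hlog.eventually (Real.eventually_log_pow_le_self 5)] with n hl hlL
    exact binomLT_phase_two_le (hK1 n) hl hlL

/-- Let `1 ≤ K n = O(log n)`,
`t_ε = ⌊50·(1 + log n/(2 K n))·n/log log n⌋` and
`q_n = 1 − exp(−K n/(log log n)⁴)`.  Then `Pr(Bin(n + t_ε, q_n) < n) → 0`
as `n → ∞`. -/
theorem phase_two_succeeds
    (K : ℕ → ℕ) (hK1 : ∀ n, 1 ≤ K n)
    (hKO : ∃ C : ℝ, ∀ᶠ n : ℕ in atTop, (K n : ℝ) ≤ C * Real.log n) :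
    Tendsto
      (fun n : ℕ =>
        let tε : ℕ :=
          ⌊50 * (1 + Real.log n / (2 * K n)) * n / Real.log (Real.log n)⌋₊
        let q : ℝ := 1 - Real.exp (-(K n : ℝ) / (Real.log (Real.log n)) ^ 4)
        binomLT (n + tε) q (n : ℝ))
      atTop (nhds 0) :=
  phase_two_succeeds_general K hK1
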